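/- For every natural number ℓ ≥ 1, in ℤ[y,y⁻¹,z,z⁻¹][[q]] one has ∏_{ε₁,ε₂∈{±1}}(1 − q y^{ε₁} z^{ε₂}) · ∑_{k=0}^{ℓ−1} ∑_{σ=0}^{∞} q^{2k+σ} χ_σ(y) χ_σ(z) = 1 − q^{2ℓ}. (so(2)⊕so(4) decomposition of the order-ℓ scalar singleton Rac_ℓ of so(2,4).) -/

import Mathlib

/-!
Writing `χ_σ(w) = S_σ(w + w⁻¹)` with `S` the rescaled Chebyshev polynomials of the second kind
(`S_{n+2} = x S_{n+1} - S_n`), the products `u_σ = S_σ(a) S_σ(b)` of two solutions of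
second-order recurrences satisfy a fourth-order recurrence with characteristic polynomial
`1 - ab q + (a² + b² - 2) q² - ab q³ + q⁴`; its initial values give
`(1 - ab q + (a² + b² - 2) q² - ab q³ + q⁴) ∑ u_σ q^σ = 1 - q²`. For `a = y + y⁻¹`, `b = z + z⁻¹`
that quartic factors as `∏ (1 - q y^{±1} z^{±1})`, pairing the factors with reciprocal roots.
The sum over `k` multiplies the series by `∑_{k<ℓ} q^{2k}`, which turns `1 - q²` into `1 - q^{2ℓ}`.
-/

/-- The two-variable Laurent polynomial ring ℤ[y,y⁻¹,z,z⁻¹], realised as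
Laurent polynomials in `z` over Laurent polynomials in `y`. -/
noncomputable abbrev L2 : Type := LaurentPolynomial (LaurentPolynomial ℤ)

/-- The su(2) character `χ_n(y) = ∑_{k=0}^n y^{n-2k}`, in the variable `y`. -/
noncomputable def chiY (n : ℕ) : L2 :=
  LaurentPolynomial.C (∑ k ∈ Finset.range (n + 1), LaurentPolynomial.T ((n : ℤ) - 2 * k))

/-- The su(2) character `χ_n(z) = ∑_{k=0}^n z^{n-2k}`, in the variable `z`. -/
noncomputable def chiZv (n : ℕ) : L2 :=
  ∑ k ∈ Finset.range (n + 1), LaurentPolynomial.T ((n : ℤ) - 2 * k)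

/-- `y^{ε₁} z^{ε₂}` as an element of ℤ[y,y⁻¹,z,z⁻¹]. -/
noncomputable def yz (e₁ e₂ : ℤ) : L2 :=
  LaurentPolynomial.C (LaurentPolynomial.T e₁) * LaurentPolynomial.T e₂

/-- `∏_{ε₁,ε₂∈{±1}} (1 - q y^{ε₁} z^{ε₂})`, the inverse of the universal AdS₅
function `P₄(q,y,z)`, in ℤ[y,y⁻¹,z,z⁻¹][[q]]. -/
noncomputable def P4inv : PowerSeries L2 :=
  (1 - PowerSeries.C (yz 1 1) * PowerSeries.X) *
  (1 - PowerSeries.C (yz 1 (-1)) * PowerSeries.X) *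
  (1 - PowerSeries.C (yz (-1) 1) * PowerSeries.X) *
  (1 - PowerSeries.C (yz (-1) (-1)) * PowerSeries.X)

open PowerSeries

namespace Polynomial.Chebyshev

variable {R : Type*} [CommRing R]

theorem S_eval_add_two (x : R) (n : ℤ) :
    (S R (n + 2)).eval x = x * (S R (n + 1)).eval x - (S R n).eval x := by
  simp

theorem S_eval_mul_S_eval_add_four (a b : R) (n : ℤ) :
    (S R (n + 4)).eval a * (S R (n + 4)).eval b
      - a * b * ((S R (n + 3)).eval a * (S R (n + 3)).eval b)
      + (a ^ 2 + b ^ 2 - 2) * ((S R (n + 2)).eval a * (S R (n + 2)).eval b)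
      - a * b * ((S R (n + 1)).eval a * (S R (n + 1)).eval b)
      + (S R n).eval a * (S R n).eval b = 0 := by
  have h4 (x : R) : (S R (n + 4)).eval x = x * (S R (n + 3)).eval x - (S R (n + 2)).eval x := by
    simpa [add_assoc] using S_eval_add_two x (n + 2)
  have h3 (x : R) : (S R (n + 3)).eval x = x * (S R (n + 2)).eval x - (S R (n + 1)).eval x := by
    simpa [add_assoc] using S_eval_add_two x (n + 1)
  simp only [h4, h3, S_eval_add_two]
  ring

end Polynomial.Chebyshev

section

open Polynomial.Chebyshev (S S_two S_add_two S_eval_add_two S_eval_mul_S_eval_add_four)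

theorem PowerSeries.quartic_mul_mk_S_eval_mul_S_eval {R : Type*} [CommRing R] (a b : R) :
    (1 - C (a * b) * X + C (a ^ 2 + b ^ 2 - 2) * X ^ 2 - C (a * b) * X ^ 3 + X ^ 4) *
      mk (fun n : ℕ => (S R n).eval a * (S R n).eval b) = (1 - X ^ 2 : R⟦X⟧) := by
  ext n
  simp only [sub_mul, add_mul, one_mul, mul_assoc, map_add, map_sub, coeff_C_mul,
    coeff_X_pow_mul', coeff_one, coeff_X_pow]
  match n with
  | 0 => simp
  | 1 => simp
  | 2 => norm_num [S_two, coeff_succ_X_mul]; ring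
  | 3 =>
    have h3 (x : R) : (S R 3).eval x = x * (S R 2).eval x - (S R 1).eval x := by
      simpa using S_eval_add_two x 1
    norm_num [h3, S_two, coeff_succ_X_mul]
    ring
  | m + 4 =>
    simp [coeff_succ_X_mul, -S_add_two]
    linear_combination S_eval_mul_S_eval_add_four a b m

end

theorem PowerSeries.prod_one_sub_C_mul_X_eq_quartic {R : Type*} [CommRing R] (y y' z z' : R)
    (hy : y * y' = 1) (hz : z * z' = 1) :
    (1 - C (y * z) * X) * (1 - C (y * z') * X) * (1 - C (y' * z) * X) * (1 - C (y' * z') * X) =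
      (1 - C ((y + y') * (z + z')) * X + C ((y + y') ^ 2 + (z + z') ^ 2 - 2) * X ^ 2
        - C ((y + y') * (z + z')) * X ^ 3 + X ^ 4 : R⟦X⟧) := by
  have pair (u u' v v' : R) (h : u * u' * (v * v') = 1) :
      (1 - C (u * v) * X) * (1 - C (u' * v') * X) =
        (1 - C (u * v + u' * v') * X + X ^ 2 : R⟦X⟧) := by
    have h' : C (u * v) * C (u' * v') = (1 : R⟦X⟧) := by
      rw [← map_mul, ← map_one C]
      congr 1
      linear_combination h
    rw [map_add]
    linear_combination X ^ 2 * h'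
  have hmid : (y * z + y' * z') * (y * z' + y' * z) + 2 = (y + y') ^ 2 + (z + z') ^ 2 - 2 := by
    linear_combination (z ^ 2 + z' ^ 2 - 2) * hy + (y ^ 2 + y' ^ 2 - 2) * hz
  calc _ = (1 - C (y * z) * X) * (1 - C (y' * z') * X) *
        ((1 - C (y * z') * X) * (1 - C (y' * z) * X)) := by ring
    _ = (1 - C (y * z + y' * z') * X + X ^ 2) * (1 - C (y * z' + y' * z) * X + X ^ 2) := by
      rw [pair y y' z z' (by linear_combination z * z' * hy + hz),
        pair y y' z' z (by linear_combination z * z' * hy + hz)]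
    _ = _ := by
      rw [← hmid]
      simp only [map_add, map_mul, map_ofNat]
      ring

theorem PowerSeries.mk_sum_ite_sub_eq_sum_X_pow_mul {R ι : Type*} [CommRing R] (s : Finset ι)
    (d : ι → ℕ) (f : ℕ → R) :
    mk (fun m => ∑ k ∈ s, if d k ≤ m then f (m - d k) else 0) = (∑ k ∈ s, X ^ d k) * mk f := by
  ext m
  simp [Finset.sum_mul, coeff_X_pow_mul']

namespace LaurentPolynomial

variable {R : Type*} [CommRing R]

theorem T_one_mul_T_neg_one : (T 1 : R[T;T⁻¹]) * T (-1) = 1 := by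
  rw [← T_add, add_neg_cancel, T_zero]

theorem sum_range_T_sub_two_mul_succ (n : ℕ) :
    ∑ k ∈ Finset.range (n + 1 + 1), (T (((n + 1 : ℕ) : ℤ) - 2 * k) : R[T;T⁻¹]) =
      T (n + 1) + T (-1) * ∑ k ∈ Finset.range (n + 1), T ((n : ℤ) - 2 * k) := by
  rw [Finset.sum_range_succ', Finset.mul_sum, add_comm]
  congr 1
  refine Finset.sum_congr rfl fun k _ => ?_
  rw [← T_add]
  congr 1
  push_cast
  ring

theorem sum_range_T_sub_two_mul_eq_eval_S (n : ℕ) :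
    ∑ k ∈ Finset.range (n + 1), (T ((n : ℤ) - 2 * k) : R[T;T⁻¹]) =
      (Polynomial.Chebyshev.S R[T;T⁻¹] n).eval (T 1 + T (-1)) := by
  induction n using Nat.twoStepInduction with
  | zero => simp
  | one => norm_num [Finset.sum_range_succ]
  | more n ih₀ ih₁ =>
    have hT (m : ℤ) : (T (m + 1) : R[T;T⁻¹]) = T 1 * T m := by rw [← T_add, add_comm]
    have hS : (Polynomial.Chebyshev.S R[T;T⁻¹] ((n : ℤ) + 1 + 1)).eval (T 1 + T (-1)) =
        (T 1 + T (-1)) * (Polynomial.Chebyshev.S R[T;T⁻¹] ((n : ℤ) + 1)).eval (T 1 + T (-1)) -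
          (Polynomial.Chebyshev.S R[T;T⁻¹] n).eval (T 1 + T (-1)) := by
      rw [add_assoc, one_add_one_eq_two, Polynomial.Chebyshev.S_eval_add_two]
    have hsucc := sum_range_T_sub_two_mul_succ (R := R) n
    rw [show n + 2 = n + 1 + 1 from rfl, sum_range_T_sub_two_mul_succ (n + 1)]
    push_cast at ih₁ hsucc ⊢
    rw [hS, ← ih₀, ← ih₁, hT]
    linear_combination -T 1 * hsucc -
      (∑ k ∈ Finset.range (n + 1), (T ((n : ℤ) - 2 * k) : R[T;T⁻¹])) * T_one_mul_T_neg_one (R := R)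

end LaurentPolynomial

open LaurentPolynomial (T T_one_mul_T_neg_one sum_range_T_sub_two_mul_eq_eval_S)

theorem chiY_eq_eval_S (n : ℕ) :
    chiY n = (Polynomial.Chebyshev.S L2 n).eval (LaurentPolynomial.C (T 1 + T (-1))) := by
  rw [chiY, sum_range_T_sub_two_mul_eq_eval_S, LaurentPolynomial.C_eq_algebraMap,
    Polynomial.Chebyshev.algebraMap_eval_S, ← LaurentPolynomial.C_eq_algebraMap]

theorem chiZv_eq_eval_S (n : ℕ) : chiZv n = (Polynomial.Chebyshev.S L2 n).eval (T 1 + T (-1)) :=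
  sum_range_T_sub_two_mul_eq_eval_S n

theorem rac_ell_so24_decomposition_general (ℓ : ℕ) :
    P4inv * PowerSeries.mk (fun m =>
      ∑ k ∈ Finset.range ℓ, if 2 * k ≤ m then chiY (m - 2 * k) * chiZv (m - 2 * k) else 0) =
    1 - PowerSeries.X ^ (2 * ℓ) := by
  have hP4inv : P4inv = _ :=
    prod_one_sub_C_mul_X_eq_quartic (LaurentPolynomial.C (T 1)) (LaurentPolynomial.C (T (-1)))
      (T 1 : L2) (T (-1)) (by rw [← map_mul, T_one_mul_T_neg_one, map_one]) T_one_mul_T_neg_one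
  rw [mk_sum_ite_sub_eq_sum_X_pow_mul (Finset.range ℓ) (2 * ·) (fun n => chiY n * chiZv n),
    mul_left_comm, hP4inv, ← map_add]
  simp only [chiY_eq_eval_S, chiZv_eq_eval_S]
  rw [quartic_mul_mk_S_eval_mul_S_eval]
  simp only [pow_mul, geom_sum_mul_neg]

/-- so(2)⊕so(4) decomposition of the order-ℓ scalar singleton `Rac_ℓ` of so(2,4):
`∏_{ε₁,ε₂}(1 - q y^{ε₁}z^{ε₂}) · ∑_{k=0}^{ℓ-1} ∑_{σ≥0} q^{2k+σ} χ_σ(y)χ_σ(z) = 1 - q^{2ℓ}`. -/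
theorem rac_ell_so24_decomposition (ℓ : ℕ) (hℓ : 1 ≤ ℓ) :
    P4inv * PowerSeries.mk (fun m =>
      ∑ k ∈ Finset.range ℓ, if 2 * k ≤ m then chiY (m - 2 * k) * chiZv (m - 2 * k) else 0) =
    1 - PowerSeries.X ^ (2 * ℓ) :=
  rac_ell_so24_decomposition_general ℓ
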